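/- arXiv:1006.5931 — 10 statements merged into one kernel-verified Lean document; each statement's English description precedes it below -/
import Mathlib

section
/- Let M = -(c(η_A + μ_A) + μ_A μ_m + η_A(μ_m - μ_b)) and suppose M > 0 and K = k N_h. Then the point E₂* = (N_h, 0, 0, k N_h M/(η_A μ_b), k N_h M/(μ_b μ_m + c μ_b), 0, 0), with the adjustment that S_m satisfies η_A A_m = (μ_m + c)S_m and A_m satisfies μ_b(1 - A_m/K)S_m = (η_A + μ_A)A_m, is an equilibrium of the dengue ODE system with I_h = E_h = E_m = I_m = 0. -/
section MosquitoEquilibrium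

variable {F : Type*} [Field F] {μb ηA μA μm c : F}

theorem mul_aquatic_eq_mul_susceptible (hηA : ηA ≠ 0) (hμb : μb ≠ 0) (hμmc : μm + c ≠ 0)
    (x : F) : ηA * (x / (ηA * μb)) = (μm + c) * (x / (μb * μm + c * μb)) := by
  have hden : μb * μm + c * μb = μb * (μm + c) := by ring
  rw [hden]
  field_simp

-- With `Am = K M / (ηA μb)` the logistic factor is `1 - M / (ηA μb)`, and
-- `ηA μb - M = (μm + c)(ηA + μA)`.
theorem mul_one_sub_aquatic_div_capacity (hηA : ηA ≠ 0) (hμb : μb ≠ 0) {K : F} (hK : K ≠ 0) :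
    μb * (1 - K * -(c * (ηA + μA) + μA * μm + ηA * (μm - μb)) / (ηA * μb) / K) =
      (μm + c) * (ηA + μA) / ηA := by
  field_simp
  ring

end MosquitoEquilibrium

theorem BRDFE_equilibrium_general
    (μh B βmh βhm νh ηh μb k ηA μA μm ηm c Nh : ℝ)
    (hμb : 0 < μb) (hk : 0 < k)
    (hηA : 0 < ηA) (hμm : 0 < μm)
    (hc : 0 ≤ c) (hNh : 0 < Nh) :
    let M : ℝ := -(c * (ηA + μA) + μA * μm + ηA * (μm - μb))
    let K : ℝ := k * Nh
    let Sh : ℝ := Nh; let Eh : ℝ := 0; let Ih : ℝ := 0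
    let Am : ℝ := k * Nh * M / (ηA * μb)
    let Sm : ℝ := k * Nh * M / (μb * μm + c * μb)
    let Em : ℝ := 0; let Im : ℝ := 0
    (ηA * Am = (μm + c) * Sm) ∧
    (μb * (1 - Am / K) * Sm = (ηA + μA) * Am) ∧
    μh * Nh - (B * βmh * Im / Nh + μh) * Sh = 0 ∧
    B * βmh * (Im / Nh) * Sh - (νh + μh) * Eh = 0 ∧
    νh * Eh - (ηh + μh) * Ih = 0 ∧
    μb * (1 - Am / K) * (Sm + Em + Im) - (ηA + μA) * Am = 0 ∧
    -(B * βhm * Ih / Nh + μm) * Sm + ηA * Am - c * Sm = 0 ∧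
    B * βhm * (Ih / Nh) * Sm - (μm + ηm) * Em - c * Em = 0 ∧
    ηm * Em - μm * Im - c * Im = 0 := by
  intro M K Sh Eh Ih Am Sm Em Im
  have hηA' : ηA ≠ 0 := hηA.ne'
  have hμb' : μb ≠ 0 := hμb.ne'
  have hrecruit : ηA * Am = (μm + c) * Sm :=
    mul_aquatic_eq_mul_susceptible hηA' hμb' (by positivity) _
  have hlogistic : μb * (1 - Am / K) * Sm = (ηA + μA) * Am :=
    calc μb * (1 - Am / K) * Sm = (ηA + μA) / ηA * ((μm + c) * Sm) := by
          rw [mul_one_sub_aquatic_div_capacity hηA' hμb' (by positivity)]; ring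
      _ = (ηA + μA) * Am := by rw [← hrecruit]; field_simp
  refine ⟨hrecruit, hlogistic, ?_, ?_, ?_, ?_, ?_, ?_, ?_⟩
  · simp [Im, Sh]
  · simp [Im, Eh]
  · simp [Eh, Ih]
  · simpa [Em, Im] using sub_eq_zero.mpr hlogistic
  · simp only [Ih]
    linear_combination hrecruit
  · simp [Ih, Em]
  · simp [Em, Im]

theorem BRDFE_equilibrium
    (μh B βmh βhm νh ηh μb k ηA μA μm ηm c Nh : ℝ)
    (hμh : 0 < μh) (hB : 0 < B) (hβmh : 0 < βmh) (hβhm : 0 < βhm)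
    (hνh : 0 < νh) (hηh : 0 < ηh) (hμb : 0 < μb) (hk : 0 < k)
    (hηA : 0 < ηA) (hμA : 0 < μA) (hμm : 0 < μm) (hηm : 0 < ηm)
    (hc : 0 ≤ c) (hNh : 0 < Nh)
    (hM : 0 < -(c * (ηA + μA) + μA * μm + ηA * (μm - μb))) :
    let M : ℝ := -(c * (ηA + μA) + μA * μm + ηA * (μm - μb))
    let K : ℝ := k * Nh
    let Sh : ℝ := Nh; let Eh : ℝ := 0; let Ih : ℝ := 0
    let Am : ℝ := k * Nh * M / (ηA * μb)
    let Sm : ℝ := k * Nh * M / (μb * μm + c * μb)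
    let Em : ℝ := 0; let Im : ℝ := 0
    (ηA * Am = (μm + c) * Sm) ∧
    (μb * (1 - Am / K) * Sm = (ηA + μA) * Am) ∧
    μh * Nh - (B * βmh * Im / Nh + μh) * Sh = 0 ∧
    B * βmh * (Im / Nh) * Sh - (νh + μh) * Eh = 0 ∧
    νh * Eh - (ηh + μh) * Ih = 0 ∧
    μb * (1 - Am / K) * (Sm + Em + Im) - (ηA + μA) * Am = 0 ∧
    -(B * βhm * Ih / Nh + μm) * Sm + ηA * Am - c * Sm = 0 ∧
    B * βhm * (Ih / Nh) * Sm - (μm + ηm) * Em - c * Em = 0 ∧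
    ηm * Em - μm * Im - c * Im = 0 :=
  BRDFE_equilibrium_general μh B βmh βhm νh ηh μb k ηA μA μm ηm c Nh hμb hk hηA hμm hc hNh
end

section
/- If all disease compartments vanish (E_h = I_h = E_m = I_m = 0) at an equilibrium of the dengue ODE system, then S_h = N_h, and either (A_m, S_m) = (0,0) or A_m = K·M/(η_A μ_b) and S_m = η_A A_m/(μ_m + c), where M = -(c(η_A + μ_A) + μ_A μ_m + η_A(μ_m - μ_b)). -/
/-!
With no infection, the host equation forces `S_h = N_h`, and the adult-mosquito equation makes
`S_m = η_A A_m / (μ_m + c)` proportional to the aquatic stage. Substituting into the aquatic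
equation leaves the logistic balance `η_A μ_b (1 - A_m / K) A_m = (η_A + μ_A)(μ_m + c) A_m`,
whose roots are `A_m = 0` and `A_m = K (η_A μ_b - (η_A + μ_A)(μ_m + c)) / (η_A μ_b)`, and
`η_A μ_b - (η_A + μ_A)(μ_m + c)` is exactly `M`.
-/

lemma eq_of_logistic_balance {a b K x : ℝ} (hK : K ≠ 0) (ha : a ≠ 0) (hx : x ≠ 0)
    (h : a * (1 - x / K) * x = b * x) : x = K * (a - b) / a := by
  have hbal : a * (1 - x / K) = b := mul_right_cancel₀ hx h
  field_simp at hbal ⊢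
  linear_combination -hbal

theorem disease_free_equilibria_classification_general
    (μh B βmh βhm μb K ηA μA μm c Nh : ℝ)
    (Sh Ih Am Sm Em Im : ℝ)
    (hμh : 0 < μh) (hμb : 0 < μb) (hK : 0 < K)
    (hηA : 0 < ηA) (hμm : 0 < μm)
    (hc : 0 ≤ c)
    (hIh : Ih = 0) (hEm : Em = 0) (hIm : Im = 0)
    (e1 : μh * Nh - (B * βmh * Im / Nh + μh) * Sh = 0)
    (e4 : μb * (1 - Am / K) * (Sm + Em + Im) - (ηA + μA) * Am = 0)
    (e5 : -(B * βhm * Ih / Nh + μm) * Sm + ηA * Am - c * Sm = 0) :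
    Sh = Nh ∧
      ((Am = 0 ∧ Sm = 0) ∨
        (Am = K * (-(c * (ηA + μA) + μA * μm + ηA * (μm - μb))) / (ηA * μb) ∧
          Sm = ηA * Am / (μm + c))) := by
  subst hIh hEm hIm
  have hSh : Sh = Nh :=
    mul_left_cancel₀ hμh.ne' (by simp only [mul_zero, zero_div, zero_add] at e1; linarith)
  have hμmc : μm + c ≠ 0 := by positivity
  have hSm : Sm = ηA * Am / (μm + c) := by
    rw [eq_div_iff hμmc]
    simp only [mul_zero, zero_div, zero_add] at e5
    linarith
  refine ⟨hSh, ?_⟩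
  rcases eq_or_ne Am 0 with hAm | hAm
  · exact Or.inl ⟨hAm, by simp [hSm, hAm]⟩
  · refine Or.inr ⟨?_, hSm⟩
    have hbal : ηA * μb * (1 - Am / K) * Am = (ηA + μA) * (μm + c) * Am := by
      have e4' : μb * (1 - Am / K) * (ηA * Am / (μm + c)) = (ηA + μA) * Am := by
        simp only [hSm, add_zero] at e4
        linarith
      calc ηA * μb * (1 - Am / K) * Am
          = (μm + c) * (μb * (1 - Am / K) * (ηA * Am / (μm + c))) := by field_simp
        _ = (ηA + μA) * (μm + c) * Am := by rw [e4']; ring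
    rw [eq_of_logistic_balance hK.ne' (by positivity) hAm hbal]
    ring

theorem disease_free_equilibria_classification
    (μh B βmh βhm νh ηh μb K ηA μA μm ηm c Nh : ℝ)
    (Sh Eh Ih Am Sm Em Im : ℝ)
    (hμh : 0 < μh) (hB : 0 < B) (hβmh : 0 < βmh) (hβhm : 0 < βhm)
    (hνh : 0 < νh) (hηh : 0 < ηh) (hμb : 0 < μb) (hK : 0 < K)
    (hηA : 0 < ηA) (hμA : 0 < μA) (hμm : 0 < μm) (hηm : 0 < ηm)
    (hc : 0 ≤ c) (hNh : 0 < Nh)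
    (hEh : Eh = 0) (hIh : Ih = 0) (hEm : Em = 0) (hIm : Im = 0)
    (e1 : μh * Nh - (B * βmh * Im / Nh + μh) * Sh = 0)
    (e2 : B * βmh * (Im / Nh) * Sh - (νh + μh) * Eh = 0)
    (e3 : νh * Eh - (ηh + μh) * Ih = 0)
    (e4 : μb * (1 - Am / K) * (Sm + Em + Im) - (ηA + μA) * Am = 0)
    (e5 : -(B * βhm * Ih / Nh + μm) * Sm + ηA * Am - c * Sm = 0)
    (e6 : B * βhm * (Ih / Nh) * Sm - (μm + ηm) * Em - c * Em = 0)
    (e7 : ηm * Em - μm * Im - c * Im = 0) :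
    Sh = Nh ∧
      ((Am = 0 ∧ Sm = 0) ∨
        (Am = K * (-(c * (ηA + μA) + μA * μm + ηA * (μm - μb))) / (ηA * μb) ∧
          Sm = ηA * Am / (μm + c))) :=
  disease_free_equilibria_classification_general μh B βmh βhm μb K ηA μA μm c Nh Sh Ih Am Sm Em Im
    hμh hμb hK hηA hμm hc hIh hEm hIm e1 e4 e5
end

section
/- With positive parameters and M > 0, define R₀² = B² k β_hm β_mh η_m ν_h M / (μ_b (η_h + μ_h)(c + μ_m)²(c + η_m + μ_m)(μ_h + ν_h)). Then R₀² is strictly decreasing as a function of c ≥ 0 on the interval where M > 0. -/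
theorem StrictAntiOn.div_of_monotoneOn {α 𝕜 : Type*} [Preorder α] [Field 𝕜] [LinearOrder 𝕜]
    [IsStrictOrderedRing 𝕜] {f g : α → 𝕜} {s : Set α} (hf : StrictAntiOn f s)
    (hg : MonotoneOn g s) (hf₀ : ∀ x ∈ s, 0 < f x) (hg₀ : ∀ x ∈ s, 0 < g x) :
    StrictAntiOn (fun x => f x / g x) s := fun a ha b hb hab =>
  calc f b / g b < f a / g b := div_lt_div_of_pos_right (hf ha hb hab) (hg₀ b hb)
    _ ≤ f a / g a := div_le_div_of_nonneg_left (hf₀ a ha).le (hg₀ a ha) (hg ha hb hab.le)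

theorem R0sq_strictAntiOn
    (B k βhm βmh ηm νh μb ηh μh μm ηA μA : ℝ)
    (hB : 0 < B) (hk : 0 < k) (hβhm : 0 < βhm) (hβmh : 0 < βmh)
    (hηm : 0 < ηm) (hνh : 0 < νh) (hμb : 0 < μb) (hηh : 0 < ηh)
    (hμh : 0 < μh) (hμm : 0 < μm) (hηA : 0 < ηA) (hμA : 0 < μA) :
    StrictAntiOn
      (fun c : ℝ =>
        B ^ 2 * k * βhm * βmh * ηm * νh * (-(c * (ηA + μA) + μA * μm + ηA * (μm - μb))) /
          (μb * (ηh + μh) * (c + μm) ^ 2 * (c + ηm + μm) * (μh + νh)))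
      {c : ℝ | 0 ≤ c ∧ 0 < -(c * (ηA + μA) + μA * μm + ηA * (μm - μb))} := by
  have hA : 0 < B ^ 2 * k * βhm * βmh * ηm * νh := by positivity
  refine StrictAntiOn.div_of_monotoneOn ?_ ?_ ?_ ?_
  · intro a _ b _ hab
    have hslope : 0 < ηA + μA := by positivity
    dsimp only
    gcongr
  · rintro a ⟨ha, -⟩ b - hab
    dsimp only
    gcongr
  · exact fun c hc => mul_pos hA hc.2
  · rintro c ⟨hc, -⟩
    positivity
end

section
/- With the Cape Verde parameter values N_h = 480000, B = 1, β_mh = β_hm = 0.375, μ_h = 1/(71·365), η_h = 1/3, μ_m = 1/11, μ_b = 6, μ_A = 1/4, η_A = 0.08, η_m = 1/11, ν_h = 1/4, k = 3, the basic reproduction number satisfies R₀ < 1 if c > 0.084 (with c small enough that M > 0). -/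
/-!
`R₀²` is decreasing in the control rate `c`: its numerator is a positive multiple of `M(c)`, which is
affine with slope `-(η_A + μ_A) ≤ 0`, while its denominator is a positive multiple of
`(c + μ_m)² (c + η_m + μ_m)`, which increases on `c ≥ 0`. So it suffices that `R₀²(0.084) ≤ 1`;
with the Cape Verde values `R₀²(0.084) ≈ 0.995`.
-/

noncomputable section

structure VectorHostParams where
  B : ℝ
  k : ℝ
  βhm : ℝ
  βmh : ℝ
  ηm : ℝ
  νh : ℝ
  μb : ℝ
  ηh : ℝ
  μh : ℝ
  μm : ℝ
  μA : ℝ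
  ηA : ℝ

namespace VectorHostParams

variable (p : VectorHostParams)

def M (c : ℝ) : ℝ :=
  -(c * (p.ηA + p.μA) + p.μA * p.μm + p.ηA * (p.μm - p.μb))

def R0sq (c : ℝ) : ℝ :=
  p.B ^ 2 * p.k * p.βhm * p.βmh * p.ηm * p.νh * p.M c /
    (p.μb * (p.ηh + p.μh) * (c + p.μm) ^ 2 * (c + p.ηm + p.μm) * (p.μh + p.νh))

def capeVerde : VectorHostParams where
  B := 1
  k := 3
  βhm := 0.375
  βmh := 0.375
  ηm := 1 / 11
  νh := 1 / 4
  μb := 6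
  ηh := 1 / 3
  μh := 1 / (71 * 365)
  μm := 1 / 11
  μA := 1 / 4
  ηA := 0.08

variable {p}

theorem M_antitone (h : 0 ≤ p.ηA + p.μA) : Antitone p.M := fun c d hcd => by
  unfold M
  linarith [mul_le_mul_of_nonneg_right hcd h]

theorem R0sq_lt_one_of_le_one (hK : 0 ≤ p.B ^ 2 * p.k * p.βhm * p.βmh * p.ηm * p.νh)
    (hA : 0 ≤ p.ηA + p.μA) (hμ : 0 < p.μb * (p.ηh + p.μh)) (hν : 0 < p.μh + p.νh)
    (hμm : 0 < p.μm) (hηm : 0 ≤ p.ηm) {c₀ c : ℝ} (hc₀ : 0 ≤ c₀) (hR : p.R0sq c₀ ≤ 1)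
    (hc : c₀ < c) : p.R0sq c < 1 := by
  have hden₀ : 0 < p.μb * (p.ηh + p.μh) * (c₀ + p.μm) ^ 2 * (c₀ + p.ηm + p.μm) * (p.μh + p.νh) := by
    have : 0 < c₀ + p.μm := by linarith
    have : 0 < c₀ + p.ηm + p.μm := by linarith
    positivity
  have hden : p.μb * (p.ηh + p.μh) * (c₀ + p.μm) ^ 2 * (c₀ + p.ηm + p.μm) * (p.μh + p.νh) <
      p.μb * (p.ηh + p.μh) * (c + p.μm) ^ 2 * (c + p.ηm + p.μm) * (p.μh + p.νh) := by
    have : 0 ≤ c₀ + p.μm := by linarith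
    have : 0 < c₀ + p.ηm + p.μm := by linarith
    gcongr
  rw [R0sq, div_le_one hden₀] at hR
  rw [R0sq, div_lt_one (hden₀.trans hden)]
  calc p.B ^ 2 * p.k * p.βhm * p.βmh * p.ηm * p.νh * p.M c
      ≤ p.B ^ 2 * p.k * p.βhm * p.βmh * p.ηm * p.νh * p.M c₀ :=
        mul_le_mul_of_nonneg_left (M_antitone hA hc.le) hK
    _ ≤ _ := hR
    _ < _ := hden

end VectorHostParams

end

theorem capeVerde_R0_lt_one :
    let Nh : ℝ := 480000; let B : ℝ := 1; let βmh : ℝ := 0.375; let βhm : ℝ := 0.375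
    let μh : ℝ := 1 / (71 * 365); let ηh : ℝ := 1 / 3; let μm : ℝ := 1 / 11
    let μb : ℝ := 6; let μA : ℝ := 1 / 4; let ηA : ℝ := 0.08
    let ηm : ℝ := 1 / 11; let νh : ℝ := 1 / 4; let k : ℝ := 3
    ∀ c : ℝ, 0.084 < c →
      0 < -(c * (ηA + μA) + μA * μm + ηA * (μm - μb)) →
      B ^ 2 * k * βhm * βmh * ηm * νh * (-(c * (ηA + μA) + μA * μm + ηA * (μm - μb))) /
          (μb * (ηh + μh) * (c + μm) ^ 2 * (c + ηm + μm) * (μh + νh)) < 1 := by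
  intro _ _ _ _ _ _ _ _ _ _ _ _ _ c hc _
  show VectorHostParams.capeVerde.R0sq c < 1
  refine VectorHostParams.R0sq_lt_one_of_le_one ?_ ?_ ?_ ?_ ?_ ?_ (c₀ := 0.084) (by norm_num) ?_ hc <;>
    norm_num [VectorHostParams.capeVerde, VectorHostParams.R0sq, VectorHostParams.M]
end

section
/- With the Cape Verde parameter values, R₀²(c) = 1 has a unique solution c* in the interval (0.083, 0.084), and R₀²(c) > 1 for 0 ≤ c < c*. -/
/-!
R₀²(c) is a quotient N(c)/D(c) whose numerator is affine with negative slope and whose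
denominator is positive and nondecreasing for c ≥ 0. Hence N - D is strictly decreasing on
[0, ∞), so R₀² = 1 exactly at its unique zero and R₀² > 1 to the left of it; the zero lies in
(0.083, 0.084) by the intermediate value theorem, since N - D changes sign there.
-/

open Set

lemma exists_div_eq_one_of_strictAntiOn_sub {N D : ℝ → ℝ} {a b : ℝ} (ha : 0 ≤ a)
    (hab : a ≤ b) (hD : ∀ c, 0 ≤ c → 0 < D c) (hanti : StrictAntiOn (N - D) (Ici 0))
    (hcont : ContinuousOn (N - D) (Icc a b)) (hNa : D a < N a) (hNb : N b < D b) :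
    ∃ cstar ∈ Ioo a b, N cstar / D cstar = 1 ∧
      (∀ c ∈ Ioo a b, N c / D c = 1 → c = cstar) ∧
      ∀ c, 0 ≤ c → c < cstar → 1 < N c / D c := by
  have hratio : ∀ c, 0 ≤ c → (N c / D c = 1 ↔ (N - D) c = 0) := fun c hc => by
    rw [div_eq_one_iff_eq (hD c hc).ne', Pi.sub_apply, sub_eq_zero]
  obtain ⟨cstar, hmem, hroot⟩ : ∃ cstar ∈ Ioo a b, (N - D) cstar = 0 :=
    intermediate_value_Ioo' hab hcont ⟨by simpa using hNb, by simpa using hNa⟩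
  have hcstar : 0 ≤ cstar := ha.trans hmem.1.le
  refine ⟨cstar, hmem, (hratio cstar hcstar).2 hroot, fun c hc hc1 => ?_, fun c hc hlt => ?_⟩
  · have hc0 : 0 ≤ c := ha.trans hc.1.le
    exact hanti.injOn hc0 hcstar (((hratio c hc0).1 hc1).trans hroot.symm)
  · have := hanti hc hcstar hlt
    rw [one_lt_div (hD c hc)]
    simp only [Pi.sub_apply] at this hroot
    linarith

noncomputable def capeVerdeNum (c : ℝ) : ℝ :=
  (1 : ℝ) ^ 2 * 3 * (3 / 8) * (3 / 8) * (1 / 11) * (1 / 4) *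
    (-(c * (2 / 25 + 1 / 4) + (1 / 4) * (1 / 11) + (2 / 25) * (1 / 11 - 6)))

noncomputable def capeVerdeDen (c : ℝ) : ℝ :=
  6 * (1 / 3 + 1 / 25915) * (c + 1 / 11) ^ 2 * (c + 1 / 11 + 1 / 11) * (1 / 25915 + 1 / 4)

lemma capeVerdeDen_pos {c : ℝ} (hc : 0 ≤ c) : 0 < capeVerdeDen c := by
  unfold capeVerdeDen; positivity

lemma capeVerdeDen_monotoneOn : MonotoneOn capeVerdeDen (Ici 0) := by
  intro a ha b _ hab
  simp only [mem_Ici] at ha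
  unfold capeVerdeDen
  gcongr

lemma capeVerdeNum_strictAnti : StrictAnti capeVerdeNum := by
  intro a b hab
  unfold capeVerdeNum
  linarith

lemma capeVerde_sub_strictAntiOn : StrictAntiOn (capeVerdeNum - capeVerdeDen) (Ici 0) :=
  fun a ha b hb hab => by
    simp only [Pi.sub_apply]
    linarith [capeVerdeNum_strictAnti hab, capeVerdeDen_monotoneOn ha hb hab.le]

theorem capeVerde_critical_control :
    let ηA : ℝ := 2 / 25; let μA : ℝ := 1 / 4; let μb : ℝ := 6; let μm : ℝ := 1 / 11
    let ηm : ℝ := 1 / 11; let νh : ℝ := 1 / 4; let ηh : ℝ := 1 / 3; let μh : ℝ := 1 / 25915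
    let B : ℝ := 1; let k : ℝ := 3; let βmh : ℝ := 3 / 8; let βhm : ℝ := 3 / 8
    let R0sq : ℝ → ℝ := fun c =>
      B ^ 2 * k * βhm * βmh * ηm * νh * (-(c * (ηA + μA) + μA * μm + ηA * (μm - μb))) /
        (μb * (ηh + μh) * (c + μm) ^ 2 * (c + ηm + μm) * (μh + νh))
    ∃ cstar ∈ Set.Ioo (0.083 : ℝ) 0.084,
      R0sq cstar = 1 ∧
      (∀ c ∈ Set.Ioo (0.083 : ℝ) 0.084, R0sq c = 1 → c = cstar) ∧
      ∀ c : ℝ, 0 ≤ c → c < cstar → 1 < R0sq c := by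
  show ∃ cstar ∈ Ioo (0.083 : ℝ) 0.084, capeVerdeNum cstar / capeVerdeDen cstar = 1 ∧
      (∀ c ∈ Ioo (0.083 : ℝ) 0.084, capeVerdeNum c / capeVerdeDen c = 1 → c = cstar) ∧
      ∀ c : ℝ, 0 ≤ c → c < cstar → 1 < capeVerdeNum c / capeVerdeDen c
  refine exists_div_eq_one_of_strictAntiOn_sub (by norm_num) (by norm_num)
    (fun _ => capeVerdeDen_pos) capeVerde_sub_strictAntiOn ?_ ?_ ?_
  · unfold capeVerdeNum capeVerdeDen; fun_prop
  · unfold capeVerdeNum capeVerdeDen; norm_num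
  · unfold capeVerdeNum capeVerdeDen; norm_num
end

section
/- Consider the linear subsystem for the infected compartments at the BRDFE: x' = F x - V x where x = (E_h, I_h, E_m, I_m), F contains the new-infection terms and V the transition terms. All eigenvalues of the Jacobian F - V have negative real part if and only if ρ(F V⁻¹) < 1, where ρ(F V⁻¹)² equals R₀² as given. -/
/-!
Both `μ • 1 - (F - V)` and `μ • V - F` have the shape of a 4-cycle matrix (a diagonal plus one
entry per row closing the cycle `0 → 3 → 2 → 1 → 0`), whose determinant is the product of the
diagonal minus the product of the cycle. Writing `D = ∏ dᵢ` for the product of the diagonal of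
`V` and `P` for the product of the four transfer rates, this gives
`det (μ - F V⁻¹) = μ² (μ² - P / D)`, so `ρ(F V⁻¹) = √(P / D) = √R₀²`, and the eigenvalues of
`F - V` are the roots of `∏ (μ + dᵢ) = P`. If `Re μ ≥ 0` then `|μ + dᵢ| ≥ dᵢ`, so all roots lie
in the open left half-plane when `P < D`; when `P ≥ D` the intermediate value theorem gives a
nonnegative real root.
-/

open Finset Matrix

namespace Matrix

variable {R S : Type*} [CommRing R] [CommRing S] {n : Type*} [Fintype n] [DecidableEq n]

def cycleMatrix4 (x y : Fin 4 → R) : Matrix (Fin 4) (Fin 4) R :=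
  !![x 0, 0, 0, y 0;
     y 1, x 1, 0, 0;
     0, y 2, x 2, 0;
     0, 0, y 3, x 3]

theorem det_cycleMatrix4 (x y : Fin 4 → R) :
    (cycleMatrix4 x y).det = ∏ i, x i - ∏ i, y i := by
  simp [cycleMatrix4, det_succ_row_zero, Fin.sum_univ_succ, Fin.prod_univ_four, Fin.succAbove]
  ring

theorem map_nonsing_inv (f : R →+* S) {A : Matrix n n R} (hA : IsUnit A.det) :
    A⁻¹.map f = (A.map f)⁻¹ :=
  (inv_eq_right_inv <| by
    rw [← Matrix.map_mul, mul_nonsing_inv A hA, Matrix.map_one _ f.map_zero f.map_one]).symm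

theorem mem_spectrum_iff_det_scalar_sub_eq_zero {K : Type*} [Field K] {A : Matrix n n K} {μ : K} :
    μ ∈ spectrum K A ↔ (scalar n μ - A).det = 0 := by
  rw [mem_spectrum_iff_isRoot_charpoly, Polynomial.IsRoot.def, eval_charpoly]

end Matrix

theorem prod_le_norm_prod_add {ι : Type*} (s : Finset ι) {d : ι → ℝ} (hd : ∀ i ∈ s, 0 ≤ d i)
    {z : ℂ} (hz : 0 ≤ z.re) : ∏ i ∈ s, d i ≤ ‖∏ i ∈ s, (z + d i)‖ := by
  rw [norm_prod]
  refine prod_le_prod hd fun i _ ↦ ?_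
  calc d i ≤ (z + d i).re := by simp only [Complex.add_re, Complex.ofReal_re]; linarith
    _ ≤ ‖z + d i‖ := Complex.re_le_norm _

theorem exists_nonneg_prod_add_eq {ι : Type*} [Fintype ι] [Nonempty ι] {d : ι → ℝ}
    (hd : ∀ i, 0 ≤ d i) {P : ℝ} (hP : ∏ i, d i ≤ P) :
    ∃ t : ℝ, 0 ≤ t ∧ ∏ i, (t + d i) = P := by
  set T := max 1 P
  have hT : P ≤ ∏ i, (T + d i) :=
    calc P ≤ T := le_max_right _ _
      _ ≤ T ^ Fintype.card ι := le_self_pow₀ (le_max_left _ _) Fintype.card_ne_zero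
      _ = ∏ _i : ι, T := (prod_const T).symm
      _ ≤ ∏ i, (T + d i) :=
        prod_le_prod (fun _ _ ↦ by positivity) fun i _ ↦ le_add_of_nonneg_right (hd i)
  obtain ⟨t, ht, hroot⟩ := intermediate_value_Icc (by positivity : (0 : ℝ) ≤ T)
    (f := fun t ↦ ∏ i, (t + d i)) (by fun_prop) ⟨by simpa using hP, hT⟩
  exact ⟨t, ht.1, hroot⟩

theorem forall_re_neg_of_prod_add_eq_iff {ι : Type*} [Fintype ι] [Nonempty ι] {d : ι → ℝ}
    (hd : ∀ i, 0 < d i) {P : ℝ} (hP : 0 ≤ P) :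
    (∀ z : ℂ, ∏ i, (z + d i) = P → z.re < 0) ↔ P < ∏ i, d i := by
  constructor
  · intro h
    by_contra! hle
    obtain ⟨t, ht, hroot⟩ := exists_nonneg_prod_add_eq (fun i ↦ (hd i).le) hle
    have := h t (by exact_mod_cast hroot)
    rw [Complex.ofReal_re] at this
    linarith
  · intro hlt z hz
    by_contra! hre
    have := prod_le_norm_prod_add univ (fun i _ ↦ (hd i).le) hre
    rw [hz, Complex.norm_real, Real.norm_of_nonneg hP] at this
    linarith

theorem spectralRadius_eq_ofReal_sqrt {A : Type*} [Ring A] [Algebra ℂ A] {a : A} {r : ℝ}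
    (hr : 0 ≤ r) (h : ∀ z, z ∈ spectrum ℂ a ↔ z ^ 2 * (z ^ 2 - r) = 0) :
    spectralRadius ℂ a = ENNReal.ofReal √r := by
  have hnorm : ∀ z : ℂ, z ^ 2 = r → (‖z‖₊ : ENNReal) = ENNReal.ofReal √r := fun z hz ↦ by
    rw [← enorm_eq_nnnorm, ← ofReal_norm, ← Real.sqrt_sq (norm_nonneg z), ← norm_pow, hz,
      Complex.norm_real, Real.norm_of_nonneg hr]
  have hsqrt : ((√r : ℝ) : ℂ) ^ 2 = r := by rw [← Complex.ofReal_pow, Real.sq_sqrt hr]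
  refine le_antisymm (iSup₂_le fun z hz ↦ ?_) ?_
  · rcases mul_eq_zero.1 ((h z).1 hz) with hz0 | hzr
    · simp [pow_eq_zero_iff two_ne_zero |>.1 hz0]
    · exact (hnorm z (sub_eq_zero.1 hzr)).le
  · rw [← hnorm _ hsqrt]
    exact le_iSup₂ (f := fun z _ ↦ (‖z‖₊ : ENNReal)) _ ((h _).2 (by rw [hsqrt, sub_self, mul_zero]))

namespace NextGeneration

section CommRing

variable {R S : Type*} [CommRing R] [CommRing S]

def infectionMatrix (a b : R) : Matrix (Fin 4) (Fin 4) R :=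
  !![0, 0, 0, a;
     0, 0, 0, 0;
     0, b, 0, 0;
     0, 0, 0, 0]

def transitionMatrix (d : Fin 4 → R) (e₁ e₃ : R) : Matrix (Fin 4) (Fin 4) R :=
  !![d 0, 0, 0, 0;
     -e₁, d 1, 0, 0;
     0, 0, d 2, 0;
     0, 0, -e₃, d 3]

theorem infectionMatrix_map (f : R →+* S) (a b : R) :
    (infectionMatrix a b).map f = infectionMatrix (f a) (f b) := by
  ext i j; fin_cases i <;> fin_cases j <;> simp [infectionMatrix]

theorem transitionMatrix_map (f : R →+* S) (d : Fin 4 → R) (e₁ e₃ : R) :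
    (transitionMatrix d e₁ e₃).map f = transitionMatrix (f ∘ d) (f e₁) (f e₃) := by
  ext i j; fin_cases i <;> fin_cases j <;> simp [transitionMatrix]

theorem det_transitionMatrix (d : Fin 4 → R) (e₁ e₃ : R) :
    (transitionMatrix d e₁ e₃).det = ∏ i, d i := by
  have : transitionMatrix d e₁ e₃ = cycleMatrix4 d ![0, -e₁, 0, -e₃] := by
    ext i j; fin_cases i <;> fin_cases j <;> rfl
  simp [this, det_cycleMatrix4, Fin.prod_univ_four]

theorem det_scalar_sub_jacobian (μ a b e₁ e₃ : R) (d : Fin 4 → R) :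
    (scalar (Fin 4) μ - (infectionMatrix a b - transitionMatrix d e₁ e₃)).det =
      ∏ i, (μ + d i) - a * b * e₁ * e₃ := by
  have : scalar (Fin 4) μ - (infectionMatrix a b - transitionMatrix d e₁ e₃) =
      cycleMatrix4 (fun i ↦ μ + d i) ![-a, -e₁, -b, -e₃] := by
    ext i j; fin_cases i <;> fin_cases j <;>
      simp [infectionMatrix, transitionMatrix, cycleMatrix4]
  rw [this, det_cycleMatrix4, Fin.prod_univ_four (fun i ↦ ![-a, -e₁, -b, -e₃] i)]
  simp only [Matrix.cons_val]
  ring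

theorem det_smul_transitionMatrix_sub_infectionMatrix (μ a b e₁ e₃ : R) (d : Fin 4 → R) :
    (μ • transitionMatrix d e₁ e₃ - infectionMatrix a b).det =
      μ ^ 2 * (μ ^ 2 * ∏ i, d i - a * b * e₁ * e₃) := by
  have : μ • transitionMatrix d e₁ e₃ - infectionMatrix a b =
      cycleMatrix4 (fun i ↦ μ * d i) ![-a, -(μ * e₁), -b, -(μ * e₃)] := by
    ext i j; fin_cases i <;> fin_cases j <;>
      simp [infectionMatrix, transitionMatrix, cycleMatrix4]
  simp only [this, det_cycleMatrix4, Fin.prod_univ_four, Matrix.cons_val]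
  ring

end CommRing

theorem det_scalar_sub_nextGenerationMatrix {K : Type*} [Field K] (μ a b e₁ e₃ : K)
    {d : Fin 4 → K} (hd : ∏ i, d i ≠ 0) :
    (scalar (Fin 4) μ - infectionMatrix a b * (transitionMatrix d e₁ e₃)⁻¹).det =
      μ ^ 2 * (μ ^ 2 - a * b * e₁ * e₃ / ∏ i, d i) := by
  set V := transitionMatrix d e₁ e₃
  have hV : IsUnit V.det := by rw [det_transitionMatrix]; exact hd.isUnit
  have : scalar (Fin 4) μ - infectionMatrix a b * V⁻¹ = (μ • V - infectionMatrix a b) * V⁻¹ := by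
    rw [sub_mul, smul_mul_assoc, mul_nonsing_inv V hV, smul_one_eq_diagonal, scalar_apply]
  rw [this, det_mul, det_smul_transitionMatrix_sub_infectionMatrix, det_nonsing_inv,
    det_transitionMatrix, Ring.inverse_eq_inv']
  field_simp

variable (a b e₁ e₃ : ℝ) {d : Fin 4 → ℝ}

theorem spectralRadius_nextGenerationMatrix (hd : ∀ i, 0 < d i) (hP : 0 ≤ a * b * e₁ * e₃) :
    spectralRadius ℂ ((infectionMatrix a b * (transitionMatrix d e₁ e₃)⁻¹).map Complex.ofReal) =
      ENNReal.ofReal √(a * b * e₁ * e₃ / ∏ i, d i) := by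
  have hD : 0 < ∏ i, d i := prod_pos fun i _ ↦ hd i
  have hV : IsUnit (transitionMatrix d e₁ e₃).det := by
    rw [det_transitionMatrix]; exact hD.ne'.isUnit
  have hK : (infectionMatrix a b * (transitionMatrix d e₁ e₃)⁻¹).map Complex.ofReal =
      infectionMatrix (a : ℂ) b * (transitionMatrix (fun i ↦ (d i : ℂ)) e₁ e₃)⁻¹ := by
    rw [show (Complex.ofReal : ℝ → ℂ) = Complex.ofRealHom from rfl, Matrix.map_mul,
      map_nonsing_inv _ hV, infectionMatrix_map, transitionMatrix_map]
    rfl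
  refine spectralRadius_eq_ofReal_sqrt (div_nonneg hP hD.le) fun z ↦ ?_
  rw [hK, mem_spectrum_iff_det_scalar_sub_eq_zero,
    det_scalar_sub_nextGenerationMatrix _ _ _ _ _ (by exact_mod_cast hD.ne')]
  push_cast
  rfl

theorem forall_re_neg_spectrum_jacobian_iff (hd : ∀ i, 0 < d i) (hP : 0 ≤ a * b * e₁ * e₃) :
    (∀ z ∈ spectrum ℂ ((infectionMatrix a b - transitionMatrix d e₁ e₃).map Complex.ofReal),
      z.re < 0) ↔ a * b * e₁ * e₃ < ∏ i, d i := by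
  have hJ : (infectionMatrix a b - transitionMatrix d e₁ e₃).map Complex.ofReal =
      infectionMatrix (a : ℂ) b - transitionMatrix (fun i ↦ (d i : ℂ)) e₁ e₃ := by
    rw [show (Complex.ofReal : ℝ → ℂ) = Complex.ofRealHom from rfl,
      Matrix.map_sub _ (map_sub Complex.ofRealHom), infectionMatrix_map, transitionMatrix_map]
    rfl
  rw [← forall_re_neg_of_prod_add_eq_iff hd hP, hJ]
  refine forall_congr' fun z ↦ ?_
  rw [mem_spectrum_iff_det_scalar_sub_eq_zero, det_scalar_sub_jacobian, sub_eq_zero]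
  push_cast
  rfl

end NextGeneration

theorem nextGeneration_stability_general
    (B βmh βhm νh ηh μh μm ηm c k μb Nh ηA μA : ℝ)
    (hβmh : 0 < βmh) (hβhm : 0 < βhm) (hνh : 0 < νh)
    (hηh : 0 < ηh) (hμh : 0 < μh) (hμm : 0 < μm) (hηm : 0 < ηm)
    (hc : 0 ≤ c) (hk : 0 < k) (hμb : 0 < μb) (hNh : 0 < Nh)
    (hM : 0 < -(c * (ηA + μA) + μA * μm + ηA * (μm - μb))) :
    let M : ℝ := -(c * (ηA + μA) + μA * μm + ηA * (μm - μb))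
    let Smstar : ℝ := k * Nh * M / (μb * (μm + c))
    let F : Matrix (Fin 4) (Fin 4) ℝ :=
      !![0, 0, 0, B * βmh;
         0, 0, 0, 0;
         0, B * βhm * Smstar / Nh, 0, 0;
         0, 0, 0, 0]
    let V : Matrix (Fin 4) (Fin 4) ℝ :=
      !![νh + μh, 0, 0, 0;
         -νh, ηh + μh, 0, 0;
         0, 0, c + ηm + μm, 0;
         0, 0, -ηm, c + μm]
    let R0sq : ℝ := B ^ 2 * k * βhm * βmh * ηm * νh * M /
      (μb * (ηh + μh) * (c + μm) ^ 2 * (c + ηm + μm) * (μh + νh))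
    (spectralRadius ℂ ((F * V⁻¹).map (Complex.ofReal : ℝ → ℂ))) ^ 2
        = ENNReal.ofReal R0sq ∧
    ((∀ z ∈ spectrum ℂ ((F - V).map (Complex.ofReal : ℝ → ℂ)), z.re < 0) ↔
      spectralRadius ℂ ((F * V⁻¹).map (Complex.ofReal : ℝ → ℂ)) < 1) := by
  intro M Smstar F V R0sq
  set d : Fin 4 → ℝ := ![νh + μh, ηh + μh, c + ηm + μm, c + μm]
  set P := B * βmh * (B * βhm * Smstar / Nh) * νh * ηm
  have hd : ∀ i, 0 < d i := by
    intro i; fin_cases i <;> simp only [d, Fin.zero_eta, Fin.mk_one, Fin.reduceFinMk,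
      Matrix.cons_val] <;> positivity
  have hD : 0 < ∏ i, d i := prod_pos fun i _ ↦ hd i
  have hP : 0 ≤ P := by
    rw [show P = B ^ 2 * (βmh * βhm * Smstar / Nh * νh * ηm) by ring]
    positivity
  have hR0 : R0sq = P / ∏ i, d i := by
    simp only [Fin.prod_univ_four, d, P, R0sq, Smstar, M, Matrix.cons_val]
    field_simp
    ring
  have hF : F = NextGeneration.infectionMatrix (B * βmh) (B * βhm * Smstar / Nh) := rfl
  have hV : V = NextGeneration.transitionMatrix d νh ηm := rfl
  have hρ : spectralRadius ℂ ((F * V⁻¹).map Complex.ofReal) = ENNReal.ofReal √R0sq := by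
    rw [hR0, hF, hV]; exact NextGeneration.spectralRadius_nextGenerationMatrix _ _ _ _ hd hP
  have hstable : (∀ z ∈ spectrum ℂ ((F - V).map Complex.ofReal), z.re < 0) ↔ P < ∏ i, d i := by
    rw [hF, hV]; exact NextGeneration.forall_re_neg_spectrum_jacobian_iff _ _ _ _ hd hP
  rw [hρ, hstable, ← ENNReal.ofReal_pow (Real.sqrt_nonneg _),
    Real.sq_sqrt (hR0 ▸ div_nonneg hP hD.le), ENNReal.ofReal_lt_one, Real.sqrt_lt' one_pos,
    one_pow, hR0, div_lt_one hD]
  exact ⟨rfl, Iff.rfl⟩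

theorem nextGeneration_stability
    (B βmh βhm νh ηh μh μm ηm c k μb Nh ηA μA : ℝ)
    (hB : 0 < B) (hβmh : 0 < βmh) (hβhm : 0 < βhm) (hνh : 0 < νh)
    (hηh : 0 < ηh) (hμh : 0 < μh) (hμm : 0 < μm) (hηm : 0 < ηm)
    (hc : 0 ≤ c) (hk : 0 < k) (hμb : 0 < μb) (hNh : 0 < Nh)
    (hηA : 0 < ηA) (hμA : 0 < μA)
    (hM : 0 < -(c * (ηA + μA) + μA * μm + ηA * (μm - μb))) :
    let M : ℝ := -(c * (ηA + μA) + μA * μm + ηA * (μm - μb))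
    let Smstar : ℝ := k * Nh * M / (μb * (μm + c))
    let F : Matrix (Fin 4) (Fin 4) ℝ :=
      !![0, 0, 0, B * βmh;
         0, 0, 0, 0;
         0, B * βhm * Smstar / Nh, 0, 0;
         0, 0, 0, 0]
    let V : Matrix (Fin 4) (Fin 4) ℝ :=
      !![νh + μh, 0, 0, 0;
         -νh, ηh + μh, 0, 0;
         0, 0, c + ηm + μm, 0;
         0, 0, -ηm, c + μm]
    let R0sq : ℝ := B ^ 2 * k * βhm * βmh * ηm * νh * M /
      (μb * (ηh + μh) * (c + μm) ^ 2 * (c + ηm + μm) * (μh + νh))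
    (spectralRadius ℂ ((F * V⁻¹).map (Complex.ofReal : ℝ → ℂ))) ^ 2
        = ENNReal.ofReal R0sq ∧
    ((∀ z ∈ spectrum ℂ ((F - V).map (Complex.ofReal : ℝ → ℂ)), z.re < 0) ↔
      spectralRadius ℂ ((F * V⁻¹).map (Complex.ofReal : ℝ → ℂ)) < 1) :=
  nextGeneration_stability_general B βmh βhm νh ηh μh μm ηm c k μb Nh ηA μA hβmh hβhm hνh hηh hμh
    hμm hηm hc hk hμb hNh hM
end

section
/- The spectral radius of F V⁻¹, for the 4×4 matrices F and V defined from the dengue model at the BRDFE, equals the square root of R₀² = B² β_mh β_hm η_m ν_h S_m* / (N_h (η_h + μ_h)(μ_h + ν_h)(c + η_m + μ_m)(c + μ_m)). -/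
/-! `V` is block diagonal with lower bidiagonal `2 × 2` blocks, so `V⁻¹` is explicit, and
`F V⁻¹` only has entries in the blocks `(0, 2..3)` and `(2, 0..1)`. Expanding along the two
zero rows, `det (z - F V⁻¹) = z² (z² - pr)` with `p = (F V⁻¹)₀₂`, `r = (F V⁻¹)₂₀`, and
`pr = R₀²`. Hence the spectrum is `{0, R₀, -R₀}`. -/

open Matrix

theorem inv_blockLowerBidiagonal {K : Type*} [Field K] {a b d e x y : K}
    (ha : a ≠ 0) (hb : b ≠ 0) (hd : d ≠ 0) (he : e ≠ 0) :
    (!![a, 0, 0, 0; -x, b, 0, 0; 0, 0, d, 0; 0, 0, -y, e] : Matrix (Fin 4) (Fin 4) K)⁻¹ =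
      !![a⁻¹, 0, 0, 0; x / (a * b), b⁻¹, 0, 0; 0, 0, d⁻¹, 0; 0, 0, y / (d * e), e⁻¹] := by
  apply inv_eq_right_inv
  ext i j
  fin_cases i <;> fin_cases j <;> simp [mul_apply, Fin.sum_univ_four] <;> field_simp <;> ring

theorem crossBlock_mul_blockLowerBidiagonal {R : Type*} [CommRing R] (f g a b d e x y : R) :
    !![0, 0, 0, f; 0, 0, 0, 0; 0, g, 0, 0; 0, 0, 0, 0] *
        !![a, 0, 0, 0; x, b, 0, 0; 0, 0, d, 0; 0, 0, y, e] =
      !![0, 0, f * y, f * e; 0, 0, 0, 0; g * x, g * b, 0, 0; 0, 0, 0, 0] := by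
  ext i j
  fin_cases i <;> fin_cases j <;> simp [mul_apply, Fin.sum_univ_four]

theorem map_crossBlock {R S : Type*} [Zero R] [Zero S] (f : R → S) (hf : f 0 = 0)
    (p q r s : R) :
    (!![0, 0, p, q; 0, 0, 0, 0; r, s, 0, 0; 0, 0, 0, 0] : Matrix (Fin 4) (Fin 4) R).map f =
      !![0, 0, f p, f q; 0, 0, 0, 0; f r, f s, 0, 0; 0, 0, 0, 0] := by
  ext i j
  fin_cases i <;> fin_cases j <;> simp [hf]

theorem det_algebraMap_sub_crossBlock {R : Type*} [CommRing R] (z p q r s : R) :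
    (algebraMap R (Matrix (Fin 4) (Fin 4) R) z -
      !![0, 0, p, q; 0, 0, 0, 0; r, s, 0, 0; 0, 0, 0, 0]).det = z ^ 2 * (z ^ 2 - p * r) := by
  simp [det_succ_row_zero, Fin.sum_univ_succ, algebraMap_matrix_apply, Fin.succAbove]
  ring

theorem spectrum_crossBlock {K : Type*} [Field K] {p q r s ρ : K} (hρ : p * r = ρ ^ 2) :
    spectrum K !![0, 0, p, q; 0, 0, 0, 0; r, s, 0, 0; 0, 0, 0, 0] = {0, ρ, -ρ} := by
  ext z
  rw [spectrum.mem_iff, isUnit_iff_isUnit_det, isUnit_iff_ne_zero, not_not,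
    det_algebraMap_sub_crossBlock, hρ]
  have factor : z ^ 2 * (z ^ 2 - ρ ^ 2) = z ^ 2 * ((z - ρ) * (z + ρ)) := by ring
  simp [factor, sub_eq_zero, add_eq_zero_iff_eq_neg]

theorem spectralRadius_of_spectrum_eq {𝕜 A : Type*} [NormedField 𝕜] [Ring A] [Algebra 𝕜 A]
    {a : A} {ρ : 𝕜} (h : spectrum 𝕜 a = {0, ρ, -ρ}) : spectralRadius 𝕜 a = ‖ρ‖₊ := by
  rw [spectralRadius, h, iSup_insert, iSup_insert, iSup_singleton]
  simp

theorem spectralRadius_nextGeneration_general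
    (B βmh βhm νh ηh μh μm ηm c Smstar Nh : ℝ)
    (hβmh : 0 < βmh) (hβhm : 0 < βhm) (hνh : 0 < νh)
    (hηh : 0 < ηh) (hμh : 0 < μh) (hμm : 0 < μm) (hηm : 0 < ηm)
    (hc : 0 ≤ c) (hSm : 0 < Smstar) (hNh : 0 < Nh) :
    let F : Matrix (Fin 4) (Fin 4) ℝ :=
      !![0, 0, 0, B * βmh;
         0, 0, 0, 0;
         0, B * βhm * Smstar / Nh, 0, 0;
         0, 0, 0, 0]
    let V : Matrix (Fin 4) (Fin 4) ℝ :=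
      !![νh + μh, 0, 0, 0;
         -νh, ηh + μh, 0, 0;
         0, 0, c + ηm + μm, 0;
         0, 0, -ηm, c + μm]
    let R0sq : ℝ := B ^ 2 * βmh * βhm * ηm * νh * Smstar /
      (Nh * (ηh + μh) * (μh + νh) * (c + ηm + μm) * (c + μm))
    spectralRadius ℂ ((F * V⁻¹).map (Complex.ofReal : ℝ → ℂ))
        = ENNReal.ofReal (Real.sqrt R0sq) ∧
    ∀ z ∈ spectrum ℂ ((F * V⁻¹).map (Complex.ofReal : ℝ → ℂ)),
      z ≠ 0 → z = Real.sqrt R0sq ∨ z = -Real.sqrt R0sq := by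
  intro F V R0sq
  have hR0sq : 0 ≤ R0sq := by positivity
  have hpr : B * βmh * (ηm / ((c + ηm + μm) * (c + μm))) *
      (B * βhm * Smstar / Nh * (νh / ((νh + μh) * (ηh + μh)))) = R0sq := by
    simp only [R0sq]
    field_simp
    ring
  have hspec : spectrum ℂ ((F * V⁻¹).map Complex.ofReal) =
      {0, (Real.sqrt R0sq : ℂ), -(Real.sqrt R0sq : ℂ)} := by
    rw [inv_blockLowerBidiagonal (by positivity) (by positivity) (by positivity)
      (by positivity), crossBlock_mul_blockLowerBidiagonal, map_crossBlock _ Complex.ofReal_zero]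
    refine spectrum_crossBlock ?_
    rw [← Complex.ofReal_mul, ← Complex.ofReal_pow, hpr, Real.sq_sqrt hR0sq]
  refine ⟨?_, fun z hz hz0 => ?_⟩
  · rw [spectralRadius_of_spectrum_eq hspec, Complex.nnnorm_real]
    exact Real.enorm_eq_ofReal (Real.sqrt_nonneg _)
  · rw [hspec] at hz
    exact hz.resolve_left hz0

theorem spectralRadius_nextGeneration
    (B βmh βhm νh ηh μh μm ηm c Smstar Nh : ℝ)
    (hB : 0 < B) (hβmh : 0 < βmh) (hβhm : 0 < βhm) (hνh : 0 < νh)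
    (hηh : 0 < ηh) (hμh : 0 < μh) (hμm : 0 < μm) (hηm : 0 < ηm)
    (hc : 0 ≤ c) (hSm : 0 < Smstar) (hNh : 0 < Nh) :
    let F : Matrix (Fin 4) (Fin 4) ℝ :=
      !![0, 0, 0, B * βmh;
         0, 0, 0, 0;
         0, B * βhm * Smstar / Nh, 0, 0;
         0, 0, 0, 0]
    let V : Matrix (Fin 4) (Fin 4) ℝ :=
      !![νh + μh, 0, 0, 0;
         -νh, ηh + μh, 0, 0;
         0, 0, c + ηm + μm, 0;
         0, 0, -ηm, c + μm]
    let R0sq : ℝ := B ^ 2 * βmh * βhm * ηm * νh * Smstar /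
      (Nh * (ηh + μh) * (μh + νh) * (c + ηm + μm) * (c + μm))
    spectralRadius ℂ ((F * V⁻¹).map (Complex.ofReal : ℝ → ℂ))
        = ENNReal.ofReal (Real.sqrt R0sq) ∧
    ∀ z ∈ spectrum ℂ ((F * V⁻¹).map (Complex.ofReal : ℝ → ℂ)),
      z ≠ 0 → z = Real.sqrt R0sq ∨ z = -Real.sqrt R0sq :=
  spectralRadius_nextGeneration_general B βmh βhm νh ηh μh μm ηm c Smstar Nh hβmh hβhm hνh hηh hμh
    hμm hηm hc hSm hNh
end

section
/- If M ≤ 0 (where M = -(c(η_A + μ_A) + μ_A μ_m + η_A(μ_m - μ_b))), then the only equilibrium of the mosquito-only subsystem (A_m, S_m) with A_m, S_m ≥ 0 is (0, 0). -/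
/-! Eliminating `S_m` with the second equation turns the first into
`μ_b η_A (K - A_m) A_m = (η_A + μ_A)(μ_m + c) K A_m`, while `M ≤ 0` says exactly
`μ_b η_A ≤ (η_A + μ_A)(μ_m + c)`. For `A_m > 0` the left side is then strictly smaller than the
right, so `A_m = 0`; then the second equation forces `S_m = 0`, as `μ_m + c ≠ 0` because
`(η_A + μ_A)(μ_m + c) ≥ μ_b η_A > 0`. -/

lemma neg_mosquito_M_eq (μb ηA μA μm c : ℝ) :
    -(c * (ηA + μA) + μA * μm + ηA * (μm - μb)) = μb * ηA - (ηA + μA) * (μm + c) := by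
  ring

lemma mul_sub_mul_eq_of_equilibrium {a b d e K A S : ℝ} (hK : K ≠ 0)
    (h₁ : a * (1 - A / K) * S - b * A = 0) (h₂ : d * A - e * S = 0) :
    a * d * (K - A) * A = b * e * K * A := by
  have h₁' : a * (K - A) * S = b * A * K := by
    field_simp at h₁
    linear_combination h₁
  linear_combination e * h₁' + a * (K - A) * h₂

lemma eq_zero_of_mul_sub_mul_eq {p q K A : ℝ} (hp : 0 < p) (hK : 0 < K) (hA : 0 ≤ A)
    (hpq : p ≤ q) (h : p * (K - A) * A = q * K * A) : A = 0 := by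
  by_contra hA0
  have hApos : 0 < A := lt_of_le_of_ne hA (Ne.symm hA0)
  have hcancel : p * (K - A) = q * K := mul_right_cancel₀ hA0 h
  linarith [mul_le_mul_of_nonneg_right hpq hK.le, mul_pos hp hApos]

theorem mosquito_trivial_equilibrium_of_M_nonpos_general
    (μb K ηA μA μm c Am Sm : ℝ)
    (hμb : 0 < μb) (hK : 0 < K) (hηA : 0 < ηA)
    (hAm : 0 ≤ Am)
    (e1 : μb * (1 - Am / K) * Sm - (ηA + μA) * Am = 0)
    (e2 : ηA * Am - (μm + c) * Sm = 0)
    (hM : -(c * (ηA + μA) + μA * μm + ηA * (μm - μb)) ≤ 0) :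
    Am = 0 ∧ Sm = 0 := by
  rw [neg_mosquito_M_eq, sub_nonpos] at hM
  have hp : 0 < μb * ηA := mul_pos hμb hηA
  have hAm0 : Am = 0 :=
    eq_zero_of_mul_sub_mul_eq hp hK hAm hM (mul_sub_mul_eq_of_equilibrium hK.ne' e1 e2)
  have hmc : μm + c ≠ 0 := right_ne_zero_of_mul (hp.trans_le hM).ne'
  refine ⟨hAm0, ?_⟩
  rw [hAm0, mul_zero, zero_sub, neg_eq_zero] at e2
  exact (mul_eq_zero.mp e2).resolve_left hmc

theorem mosquito_trivial_equilibrium_of_M_nonpos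
    (μb K ηA μA μm c Am Sm : ℝ)
    (hμb : 0 < μb) (hK : 0 < K) (hηA : 0 < ηA) (hμA : 0 < μA)
    (hμm : 0 < μm) (hc : 0 ≤ c)
    (hAm : 0 ≤ Am) (hSm : 0 ≤ Sm)
    (e1 : μb * (1 - Am / K) * Sm - (ηA + μA) * Am = 0)
    (e2 : ηA * Am - (μm + c) * Sm = 0)
    (hM : -(c * (ηA + μA) + μA * μm + ηA * (μm - μb)) ≤ 0) :
    Am = 0 ∧ Sm = 0 :=
  mosquito_trivial_equilibrium_of_M_nonpos_general μb K ηA μA μm c Am Sm hμb hK hηA hAm e1 e2 hM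
end

section
/- If M > 0, the mosquito-only subsystem has exactly two nonnegative equilibria: (0,0) and (A_m*, S_m*) with A_m* = K M/(η_A μ_b) and S_m* = η_A A_m*/(μ_m + c), and both coordinates of the nontrivial equilibrium are strictly positive. -/
/-!
The adult equation forces `S = ηA A / (μm + c)`; substituted into the aquatic equation it leaves
`A · (K M - A ηA μb) = 0`, with `M = ηA μb - (ηA + μA)(μm + c)`. So `A = 0` or `A = K M / (ηA μb)`,
and the latter lies in `(0, K)` exactly because `0 < M < ηA μb`.
-/

theorem adult_balance_iff {ηA D A S : ℝ} (hD : D ≠ 0) :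
    ηA * A - D * S = 0 ↔ S = ηA * A / D := by
  rw [sub_eq_zero, eq_div_iff hD, mul_comm S, eq_comm]

theorem aquatic_balance_iff {μb K ηA r D A : ℝ} (hK : K ≠ 0) (hD : D ≠ 0)
    (hb : ηA * μb ≠ 0) :
    μb * (1 - A / K) * (ηA * A / D) - r * A = 0 ↔
      A = 0 ∨ A = K * (ηA * μb - r * D) / (ηA * μb) := by
  have factor : μb * (1 - A / K) * (ηA * A / D) - r * A =
      A * (K * (ηA * μb - r * D) - A * (ηA * μb)) / (K * D) := by
    field_simp
    ring
  rw [factor, div_eq_zero_iff, or_iff_left (mul_ne_zero hK hD), mul_eq_zero, sub_eq_zero,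
    eq_div_iff hb, eq_comm (a := A * _)]

theorem mosquito_equilibrium_iff {μb K ηA r D A S Astar : ℝ} (hK : K ≠ 0) (hD : D ≠ 0)
    (hb : ηA * μb ≠ 0) (hAstar : Astar = K * (ηA * μb - r * D) / (ηA * μb)) :
    (μb * (1 - A / K) * S - r * A = 0 ∧ ηA * A - D * S = 0) ↔
      (A = 0 ∧ S = 0) ∨ (A = Astar ∧ S = ηA * Astar / D) := by
  subst hAstar
  rw [adult_balance_iff hD]
  constructor
  · rintro ⟨hA, rfl⟩
    rcases (aquatic_balance_iff hK hD hb).1 hA with rfl | rfl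
    · simp
    · exact Or.inr ⟨rfl, rfl⟩
  · rintro (⟨rfl, rfl⟩ | ⟨rfl, rfl⟩)
    · simp
    · exact ⟨(aquatic_balance_iff hK hD hb).2 (Or.inr rfl), rfl⟩

theorem mosquito_equilibria_of_M_pos
    (μb K ηA μA μm c : ℝ)
    (hμb : 0 < μb) (hK : 0 < K) (hηA : 0 < ηA) (hμA : 0 < μA)
    (hμm : 0 < μm) (hc : 0 ≤ c)
    (hM : 0 < -(c * (ηA + μA) + μA * μm + ηA * (μm - μb))) :
    let M : ℝ := -(c * (ηA + μA) + μA * μm + ηA * (μm - μb))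
    let Amstar : ℝ := K * M / (ηA * μb)
    let Smstar : ℝ := ηA * Amstar / (μm + c)
    0 < Amstar ∧ 0 < Smstar ∧ Amstar < K ∧
    ∀ Am Sm : ℝ, 0 ≤ Am → 0 ≤ Sm →
      ((μb * (1 - Am / K) * Sm - (ηA + μA) * Am = 0 ∧
        ηA * Am - (μm + c) * Sm = 0) ↔
        ((Am = 0 ∧ Sm = 0) ∨ (Am = Amstar ∧ Sm = Smstar))) := by
  intro M Amstar Smstar
  have hM_eq : M = ηA * μb - (ηA + μA) * (μm + c) := by simp only [M]; ring
  have hD : 0 < μm + c := by linarith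
  have hb : 0 < ηA * μb := by positivity
  have hA : 0 < Amstar := by positivity
  refine ⟨hA, by positivity, ?_, fun Am Sm _ _ =>
    mosquito_equilibrium_iff hK.ne' hD.ne' hb.ne' (by rw [← hM_eq])⟩
  have hMb : M < ηA * μb := by rw [hM_eq]; linarith [mul_pos (add_pos hηA hμA) hD]
  calc Amstar = K * M / (ηA * μb) := rfl
    _ < K * (ηA * μb) / (ηA * μb) := by gcongr
    _ = K := mul_div_cancel_right₀ K hb.ne'
end

section
/- The region Ω = {(S_h, E_h, I_h, A_m, S_m, E_m, I_m) ∈ ℝ₊⁷ : S_h + E_h + I_h ≤ N_h, A_m ≤ k N_h, S_m + E_m + I_m ≤ m N_h} is positively invariant for the dengue ODE system, provided μ_b m ≤ (η_A + μ_A) k and η_A k ≤ (μ_m + c) m. -/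
/-!
Ω is the set where ten affine functionals of the state are nonnegative: the seven compartments
and the slacks `Nh - (Sh + Eh + Ih)`, `k Nh - Am`, `m Nh - (Sm + Em + Im)`. On the
`E`-neighbourhood of Ω (with `E ≤ 1`, so that the state stays bounded) the derivative of each
functional on its own shifted face `g i = -E` is at least `-L E`: on Ω itself every face is
inward (on `Am = k Nh` the logistic factor vanishes, on `Sm + Em + Im = m Nh` this is
`ηA k ≤ (μm + c) m`), and the infection terms only contribute `O(E)`. Hence no
`g i + ε e^{(L+1)t}` can reach `0` for a first time, and `ε → 0` gives `g i ≥ 0`.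
-/

open Set Filter Topology

section Invariance

variable {ι : Type*}

theorem HasDerivAt.nonpos_of_pos_left {f : ℝ → ℝ} {f' a b : ℝ} (hf : HasDerivAt f f' b)
    (hab : a < b) (hpos : ∀ t ∈ Ioo a b, 0 < f t) (hb : f b = 0) : f' ≤ 0 := by
  refine le_of_tendsto (hasDerivAt_iff_tendsto_slope_left_right.1 hf).1 ?_
  filter_upwards [Ioo_mem_nhdsLT hab] with t ht
  rw [slope_def_field, hb, sub_zero]
  exact div_nonpos_of_nonneg_of_nonpos (hpos t ht).le (sub_nonpos.2 ht.2.le)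

theorem ContinuousAt.nonneg_of_pos_left {f : ℝ → ℝ} {a b : ℝ} (hf : ContinuousAt f b)
    (hab : a < b) (hpos : ∀ t ∈ Ioo a b, 0 < f t) : 0 ≤ f b := by
  refine ge_of_tendsto (hf.tendsto.mono_left (nhdsWithin_le_nhds (s := Iio b))) ?_
  filter_upwards [Ioo_mem_nhdsLT hab] with t ht
  exact (hpos t ht).le

theorem exists_first_zero_of_continuous [Finite ι] {h : ι → ℝ → ℝ}
    (hc : ∀ i, Continuous (h i)) (h0 : ∀ i, 0 < h i 0) {T : ℝ}
    (hT : ∃ s ∈ Icc 0 T, ∃ i, h i s ≤ 0) :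
    ∃ τ ∈ Ioc 0 T, (∀ t ∈ Ico 0 τ, ∀ j, 0 < h j t) ∧ (∀ j, 0 ≤ h j τ) ∧ ∃ i, h i τ = 0 := by
  set bad := Icc 0 T ∩ ⋃ i, h i ⁻¹' Iic 0
  have hclosed : IsClosed bad :=
    isClosed_Icc.inter (isClosed_iUnion_of_finite fun i => isClosed_Iic.preimage (hc i))
  have hne : bad.Nonempty := by
    obtain ⟨s, hs, i, hi⟩ := hT
    exact ⟨s, hs, mem_iUnion.2 ⟨i, hi⟩⟩
  have hbdd : BddBelow bad := ⟨0, fun t ht => ht.1.1⟩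
  obtain ⟨⟨hτ0, hτT⟩, hτbad⟩ := hclosed.csInf_mem hne hbdd
  obtain ⟨i, hi⟩ := mem_iUnion.1 hτbad
  set τ := sInf bad
  have hbefore : ∀ t ∈ Ico 0 τ, ∀ j, 0 < h j t := by
    intro t ⟨ht0, htτ⟩ j
    by_contra! hj
    exact (csInf_le hbdd ⟨⟨ht0, htτ.le.trans hτT⟩, mem_iUnion.2 ⟨j, hj⟩⟩).not_gt htτ
  have hτpos : 0 < τ := hτ0.lt_of_ne fun hτ => (h0 i).not_ge (hτ ▸ hi)
  have hat : ∀ j, 0 ≤ h j τ := fun j =>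
    (hc j).continuousAt.nonneg_of_pos_left hτpos fun t ht => hbefore t (Ioo_subset_Ico_self ht) j
  exact ⟨τ, ⟨hτpos, hτT⟩, hbefore, hat, i, le_antisymm hi (hat i)⟩

-- `E ≤ 1` lets quadratic terms, bounded by a multiple of `E ^ 2`, be absorbed into `L * E`.
def FaceOutflowLinear (g : ι → ℝ → ℝ) (i : ι) (L : ℝ) : Prop :=
  ∀ t E, 0 < E → E ≤ 1 → (∀ j, -E ≤ g j t) → g i t = -E → -(L * E) ≤ deriv (g i) t

theorem FaceOutflowLinear.mono {g : ι → ℝ → ℝ} {i : ι} {L L' : ℝ}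
    (h : FaceOutflowLinear g i L) (hL : L ≤ L') : FaceOutflowLinear g i L' :=
  fun t E hE hE1 hshell hface =>
    (neg_le_neg (mul_le_mul_of_nonneg_right hL hE.le)).trans (h t E hE hE1 hshell hface)

theorem exists_uniform_faceOutflowLinear [Finite ι] {g : ι → ℝ → ℝ}
    (h : ∀ i, ∃ L, FaceOutflowLinear g i L) : ∃ L, 0 ≤ L ∧ ∀ i, FaceOutflowLinear g i L := by
  choose L hL using h
  obtain ⟨U, hU⟩ := (Set.finite_range L).bddAbove
  exact ⟨max U 0, le_max_right _ _, fun i => (hL i).mono (le_max_of_le_left (hU ⟨i, rfl⟩))⟩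

theorem nonneg_of_faceOutflowLinear [Finite ι] {g : ι → ℝ → ℝ}
    (hg : ∀ i, Differentiable ℝ (g i)) (h0 : ∀ i, 0 ≤ g i 0)
    (hface : ∀ i, ∃ L, FaceOutflowLinear g i L) {T : ℝ} (hT : 0 ≤ T) (i₀ : ι) : 0 ≤ g i₀ T := by
  obtain ⟨L, hL0, hL⟩ := exists_uniform_faceOutflowLinear hface
  -- Perturbing by `ε e^{(L+1)t}` turns the linear outflow bound into a strict inflow.
  have hpert : ∀ ε, 0 < ε → ε * Real.exp ((L + 1) * T) ≤ 1 →
      ∀ j, 0 < g j T + ε * Real.exp ((L + 1) * T) := by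
    intro ε hε hεT
    set h : ι → ℝ → ℝ := fun j t => g j t + ε * Real.exp ((L + 1) * t)
    by_contra! hexit
    obtain ⟨τ, ⟨hτ0, hτT⟩, hbefore, hat, i, hi⟩ := exists_first_zero_of_continuous (h := h)
      (fun j => (hg j).continuous.add (by fun_prop))
      (fun j => by simp only [h, mul_zero, Real.exp_zero, mul_one]; linarith [h0 j])
      ⟨T, ⟨hT, le_rfl⟩, hexit⟩
    set E := ε * Real.exp ((L + 1) * τ)
    have hE : 0 < E := by positivity
    have hE1 : E ≤ 1 := hεT.trans' (by dsimp only [E]; gcongr)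
    have hrate := hL i τ E hE hE1 (fun j => by linarith [hat j]) (by linarith [hi])
    have hexp : HasDerivAt (fun t => ε * Real.exp ((L + 1) * t)) ((L + 1) * E) τ :=
      ((((hasDerivAt_id' τ).const_mul (L + 1)).exp).const_mul ε).congr_deriv (by ring)
    have hderiv : HasDerivAt (h i) (deriv (g i) τ + (L + 1) * E) τ :=
      (hg i τ).hasDerivAt.add hexp
    have := hderiv.nonpos_of_pos_left hτ0 (fun t ht => hbefore t (Ioo_subset_Ico_self ht) i) hi
    linarith
  refine le_of_forall_pos_lt_add fun δ hδ => ?_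
  set ε := min δ 1 * Real.exp (-((L + 1) * T))
  have hεT : ε * Real.exp ((L + 1) * T) = min δ 1 := by
    rw [mul_assoc, ← Real.exp_add, neg_add_cancel, Real.exp_zero, mul_one]
  have := hpert ε (by positivity) (hεT.trans_le (min_le_right _ _)) i₀
  linarith [min_le_left δ 1]

end Invariance

theorem neg_mul_le_mul_of_le {x y E M : ℝ} (hE : 0 ≤ E) (hM : 0 ≤ M) (hx : -E ≤ x) (hxM : x ≤ M)
    (hy : -E ≤ y) (hyM : y ≤ M) : -(E * M) ≤ x * y := by
  rcases le_total 0 x with hx0 | hx0 <;> rcases le_total 0 y with hy0 | hy0 <;> nlinarith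

section Dengue

variable {μh B βmh βhm νh ηh μb k m ηA μA μm ηm c Nh : ℝ} {Sh Eh Ih Am Sm Em Im : ℝ → ℝ}

def dengueFaces (Nh k m : ℝ) (Sh Eh Ih Am Sm Em Im : ℝ → ℝ) : Fin 10 → ℝ → ℝ :=
  ![Sh, Eh, Ih, Am, Sm, Em, Im, fun t => Nh - (Sh t + Eh t + Ih t), fun t => k * Nh - Am t,
    fun t => m * Nh - (Sm t + Em t + Im t)]

theorem forall_neg_le_dengueFaces_iff {t E : ℝ} :
    (∀ j, -E ≤ dengueFaces Nh k m Sh Eh Ih Am Sm Em Im j t) ↔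
      -E ≤ Sh t ∧ -E ≤ Eh t ∧ -E ≤ Ih t ∧ -E ≤ Am t ∧ -E ≤ Sm t ∧ -E ≤ Em t ∧ -E ≤ Im t ∧
      Sh t + Eh t + Ih t ≤ Nh + E ∧ Am t ≤ k * Nh + E ∧ Sm t + Em t + Im t ≤ m * Nh + E := by
  simp [Fin.forall_fin_succ, dengueFaces]

theorem forall_nonneg_dengueFaces_iff {t : ℝ} :
    (∀ j, 0 ≤ dengueFaces Nh k m Sh Eh Ih Am Sm Em Im j t) ↔
      0 ≤ Sh t ∧ 0 ≤ Eh t ∧ 0 ≤ Ih t ∧ 0 ≤ Am t ∧ 0 ≤ Sm t ∧ 0 ≤ Em t ∧ 0 ≤ Im t ∧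
      Sh t + Eh t + Ih t ≤ Nh ∧ Am t ≤ k * Nh ∧ Sm t + Em t + Im t ≤ m * Nh := by
  simpa using forall_neg_le_dengueFaces_iff (E := 0)

theorem differentiable_dengueFaces (hSh : Differentiable ℝ Sh) (hEh : Differentiable ℝ Eh)
    (hIh : Differentiable ℝ Ih) (hAm : Differentiable ℝ Am) (hSm : Differentiable ℝ Sm)
    (hEm : Differentiable ℝ Em) (hIm : Differentiable ℝ Im) (i : Fin 10) :
    Differentiable ℝ (dengueFaces Nh k m Sh Eh Ih Am Sm Em Im i) := by
  fin_cases i <;>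
    simp only [dengueFaces, Fin.zero_eta, Fin.mk_one, Fin.reduceFinMk, Matrix.cons_val] <;> fun_prop

theorem faceOutflowLinear_Sh
    (hSh : ∀ t, HasDerivAt Sh (μh * Nh - (B * βmh * Im t / Nh + μh) * Sh t) t)
    (hμh : 0 < μh) (hB : 0 < B) (hβmh : 0 < βmh) (hNh : 0 < Nh) :
    FaceOutflowLinear (dengueFaces Nh k m Sh Eh Ih Am Sm Em Im) 0 (B * βmh / Nh) := by
  intro t E hE hE1 hshell hface
  obtain ⟨-, -, -, -, -, -, hIm, -⟩ := forall_neg_le_dengueFaces_iff.1 hshell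
  simp only [dengueFaces, Matrix.cons_val] at hface ⊢
  have hval : deriv Sh t = μh * Nh + μh * E + B * βmh / Nh * E * Im t := by
    rw [(hSh t).deriv, hface]; ring
  have ha : 0 ≤ B * βmh / Nh * E := by positivity
  rw [hval]
  nlinarith [mul_nonneg ha (by linarith : 0 ≤ Im t + 1), mul_pos hμh hNh, mul_pos hμh hE]

theorem faceOutflowLinear_Eh
    (hEh : ∀ t, HasDerivAt Eh (B * βmh * (Im t / Nh) * Sh t - (νh + μh) * Eh t) t)
    (hνh : 0 < νh) (hμh : 0 < μh) (hB : 0 < B) (hβmh : 0 < βmh) (hNh : 0 < Nh) (hm : 0 < m) :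
    FaceOutflowLinear (dengueFaces Nh k m Sh Eh Ih Am Sm Em Im) 1
      (B * βmh / Nh * ((1 + m) * Nh + 3)) := by
  intro t E hE hE1 hshell hface
  obtain ⟨hSh, hEh', hIh, -, hSm, hEm, hIm, hhost, -, hvec⟩ :=
    forall_neg_le_dengueFaces_iff.1 hshell
  simp only [dengueFaces, Matrix.cons_val] at hface ⊢
  have hval : deriv Eh t = B * βmh / Nh * (Im t * Sh t) + (νh + μh) * E := by
    rw [(hEh t).deriv, hface]; ring
  have hprod := neg_mul_le_mul_of_le hE.le (by positivity) hIm (by nlinarith) hSh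
    (by nlinarith : Sh t ≤ (1 + m) * Nh + 3)
  rw [hval]
  nlinarith [mul_le_mul_of_nonneg_left hprod (by positivity : 0 ≤ B * βmh / Nh),
    mul_pos (add_pos hνh hμh) hE]

theorem faceOutflowLinear_Ih
    (hIh : ∀ t, HasDerivAt Ih (νh * Eh t - (ηh + μh) * Ih t) t)
    (hνh : 0 < νh) (hηh : 0 < ηh) (hμh : 0 < μh) :
    FaceOutflowLinear (dengueFaces Nh k m Sh Eh Ih Am Sm Em Im) 2 νh := by
  intro t E hE hE1 hshell hface
  obtain ⟨-, hEh, -⟩ := forall_neg_le_dengueFaces_iff.1 hshell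
  simp only [dengueFaces, Matrix.cons_val] at hface ⊢
  rw [(hIh t).deriv, hface]
  nlinarith [mul_le_mul_of_nonneg_left hEh hνh.le, mul_pos (add_pos hηh hμh) hE]

theorem faceOutflowLinear_Am
    (hAm : ∀ t, HasDerivAt Am
      (μb * (1 - Am t / (k * Nh)) * (Sm t + Em t + Im t) - (ηA + μA) * Am t) t)
    (hμb : 0 < μb) (hk : 0 < k) (hηA : 0 < ηA) (hμA : 0 < μA) (hNh : 0 < Nh) :
    FaceOutflowLinear (dengueFaces Nh k m Sh Eh Ih Am Sm Em Im) 3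
      (3 * μb * (1 + 1 / (k * Nh))) := by
  intro t E hE hE1 hshell hface
  obtain ⟨-, -, -, -, hSm, hEm, hIm, -⟩ := forall_neg_le_dengueFaces_iff.1 hshell
  simp only [dengueFaces, Matrix.cons_val] at hface ⊢
  have hval : deriv Am t =
      μb * (1 + E / (k * Nh)) * (Sm t + Em t + Im t) + (ηA + μA) * E := by
    rw [(hAm t).deriv, hface]; ring
  have hw : E / (k * Nh) ≤ 1 / (k * Nh) := by gcongr
  rw [hval]
  nlinarith [mul_le_mul_of_nonneg_left (by linarith : -(3 * E) ≤ Sm t + Em t + Im t)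
      (by positivity : 0 ≤ μb * (1 + E / (k * Nh))),
    mul_le_mul_of_nonneg_left hw (by positivity : 0 ≤ 3 * μb * E), mul_pos (add_pos hηA hμA) hE]

theorem faceOutflowLinear_Sm
    (hSm : ∀ t, HasDerivAt Sm (-(B * βhm * Ih t / Nh + μm) * Sm t + ηA * Am t - c * Sm t) t)
    (hB : 0 < B) (hβhm : 0 < βhm) (hηA : 0 < ηA) (hμm : 0 < μm) (hc : 0 ≤ c) (hNh : 0 < Nh) :
    FaceOutflowLinear (dengueFaces Nh k m Sh Eh Ih Am Sm Em Im) 4 (B * βhm / Nh + ηA) := by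
  intro t E hE hE1 hshell hface
  obtain ⟨-, -, hIh, hAm, -⟩ := forall_neg_le_dengueFaces_iff.1 hshell
  simp only [dengueFaces, Matrix.cons_val] at hface ⊢
  have hval : deriv Sm t = B * βhm / Nh * E * Ih t + (μm + c) * E + ηA * Am t := by
    rw [(hSm t).deriv, hface]; ring
  have hb : 0 ≤ B * βhm / Nh * E := by positivity
  rw [hval]
  nlinarith [mul_nonneg hb (by linarith : 0 ≤ Ih t + 1), mul_le_mul_of_nonneg_left hAm hηA.le,
    mul_nonneg (add_pos_of_pos_of_nonneg hμm hc).le hE.le]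

theorem faceOutflowLinear_Em
    (hEm : ∀ t, HasDerivAt Em (B * βhm * (Ih t / Nh) * Sm t - (μm + ηm) * Em t - c * Em t) t)
    (hB : 0 < B) (hβhm : 0 < βhm) (hμm : 0 < μm) (hηm : 0 < ηm) (hc : 0 ≤ c) (hNh : 0 < Nh)
    (hm : 0 < m) :
    FaceOutflowLinear (dengueFaces Nh k m Sh Eh Ih Am Sm Em Im) 5
      (B * βhm / Nh * ((1 + m) * Nh + 3)) := by
  intro t E hE hE1 hshell hface
  obtain ⟨hSh, hEh, hIh, -, hSm', hEm', hIm, hhost, -, hvec⟩ :=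
    forall_neg_le_dengueFaces_iff.1 hshell
  simp only [dengueFaces, Matrix.cons_val] at hface ⊢
  have hval : deriv Em t = B * βhm / Nh * (Ih t * Sm t) + (μm + ηm + c) * E := by
    rw [(hEm t).deriv, hface]; ring
  have hprod := neg_mul_le_mul_of_le hE.le (by positivity) hIh (by nlinarith) hSm'
    (by nlinarith : Sm t ≤ (1 + m) * Nh + 3)
  rw [hval]
  nlinarith [mul_le_mul_of_nonneg_left hprod (by positivity : 0 ≤ B * βhm / Nh),
    mul_nonneg (by positivity : 0 ≤ μm + ηm + c) hE.le]

theorem faceOutflowLinear_Im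
    (hIm : ∀ t, HasDerivAt Im (ηm * Em t - μm * Im t - c * Im t) t)
    (hηm : 0 < ηm) (hμm : 0 < μm) (hc : 0 ≤ c) :
    FaceOutflowLinear (dengueFaces Nh k m Sh Eh Ih Am Sm Em Im) 6 ηm := by
  intro t E hE hE1 hshell hface
  obtain ⟨-, -, -, -, -, hEm, -⟩ := forall_neg_le_dengueFaces_iff.1 hshell
  simp only [dengueFaces, Matrix.cons_val] at hface ⊢
  rw [(hIm t).deriv, hface]
  nlinarith [mul_le_mul_of_nonneg_left hEm hηm.le, mul_pos hμm hE, mul_nonneg hc hE.le]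

theorem faceOutflowLinear_hostTotal
    (hSh : ∀ t, HasDerivAt Sh (μh * Nh - (B * βmh * Im t / Nh + μh) * Sh t) t)
    (hEh : ∀ t, HasDerivAt Eh (B * βmh * (Im t / Nh) * Sh t - (νh + μh) * Eh t) t)
    (hIh : ∀ t, HasDerivAt Ih (νh * Eh t - (ηh + μh) * Ih t) t)
    (hηh : 0 < ηh) (hμh : 0 < μh) :
    FaceOutflowLinear (dengueFaces Nh k m Sh Eh Ih Am Sm Em Im) 7 ηh := by
  intro t E hE hE1 hshell hface
  obtain ⟨-, -, hIh', -⟩ := forall_neg_le_dengueFaces_iff.1 hshell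
  simp only [dengueFaces, Matrix.cons_val] at hface ⊢
  have hval : deriv (fun t => Nh - (Sh t + Eh t + Ih t)) t = μh * E + ηh * Ih t := by
    have hd : HasDerivAt (fun t => Nh - (Sh t + Eh t + Ih t)) _ t :=
      (((hSh t).add (hEh t)).add (hIh t)).const_sub Nh
    rw [hd.deriv]
    linear_combination -μh * hface
  rw [hval]
  nlinarith [mul_le_mul_of_nonneg_left hIh' hηh.le, mul_pos hμh hE]

theorem faceOutflowLinear_aquaticCap
    (hAm : ∀ t, HasDerivAt Am
      (μb * (1 - Am t / (k * Nh)) * (Sm t + Em t + Im t) - (ηA + μA) * Am t) t)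
    (hμb : 0 < μb) (hk : 0 < k) (hηA : 0 < ηA) (hμA : 0 < μA) (hNh : 0 < Nh) :
    FaceOutflowLinear (dengueFaces Nh k m Sh Eh Ih Am Sm Em Im) 8 (3 * (μb / (k * Nh))) := by
  intro t E hE hE1 hshell hface
  obtain ⟨-, -, -, -, hSm, hEm, hIm, -⟩ := forall_neg_le_dengueFaces_iff.1 hshell
  simp only [dengueFaces, Matrix.cons_val] at hface ⊢
  have hAm' : Am t = k * Nh + E := by linarith
  have hval : deriv (fun t => k * Nh - Am t) t =
      μb / (k * Nh) * E * (Sm t + Em t + Im t) + (ηA + μA) * (k * Nh + E) := by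
    rw [((hAm t).const_sub (k * Nh)).deriv, hAm']
    field_simp
    ring
  have hq : 0 ≤ μb / (k * Nh) * E := by positivity
  rw [hval]
  nlinarith [mul_nonneg hq (by linarith : 0 ≤ Sm t + Em t + Im t + 3 * E),
    mul_nonneg hq (sub_nonneg.2 hE1), mul_pos (add_pos hηA hμA) (by positivity : 0 < k * Nh + E)]

theorem faceOutflowLinear_vectorTotal
    (hSm : ∀ t, HasDerivAt Sm (-(B * βhm * Ih t / Nh + μm) * Sm t + ηA * Am t - c * Sm t) t)
    (hEm : ∀ t, HasDerivAt Em (B * βhm * (Ih t / Nh) * Sm t - (μm + ηm) * Em t - c * Em t) t)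
    (hIm : ∀ t, HasDerivAt Im (ηm * Em t - μm * Im t - c * Im t) t)
    (hηA : 0 < ηA) (hμm : 0 < μm) (hc : 0 ≤ c) (hNh : 0 < Nh)
    (hpar2 : ηA * k ≤ (μm + c) * m) :
    FaceOutflowLinear (dengueFaces Nh k m Sh Eh Ih Am Sm Em Im) 9 ηA := by
  intro t E hE hE1 hshell hface
  obtain ⟨-, -, -, -, -, -, -, -, hAm, -⟩ := forall_neg_le_dengueFaces_iff.1 hshell
  simp only [dengueFaces, Matrix.cons_val] at hface ⊢
  have hval : deriv (fun t => m * Nh - (Sm t + Em t + Im t)) t =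
      (μm + c) * (m * Nh + E) - ηA * Am t := by
    have hd : HasDerivAt (fun t => m * Nh - (Sm t + Em t + Im t)) _ t :=
      (((hSm t).add (hEm t)).add (hIm t)).const_sub (m * Nh)
    rw [hd.deriv]
    linear_combination -(μm + c) * hface
  rw [hval]
  nlinarith [mul_le_mul_of_nonneg_left hAm hηA.le, mul_le_mul_of_nonneg_right hpar2 hNh.le,
    mul_nonneg (add_pos_of_pos_of_nonneg hμm hc).le hE.le]

end Dengue

theorem omega_positively_invariant_general
    (μh B βmh βhm νh ηh μb k m ηA μA μm ηm c Nh : ℝ)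
    (Sh Eh Ih Am Sm Em Im : ℝ → ℝ)
    (hμh : 0 < μh) (hB : 0 < B) (hβmh : 0 < βmh) (hβhm : 0 < βhm)
    (hνh : 0 < νh) (hηh : 0 < ηh) (hμb : 0 < μb) (hk : 0 < k) (hm : 0 < m)
    (hηA : 0 < ηA) (hμA : 0 < μA) (hμm : 0 < μm) (hηm : 0 < ηm)
    (hc : 0 ≤ c) (hNh : 0 < Nh)
    (hpar2 : ηA * k ≤ (μm + c) * m)
    (hSh : ∀ t, HasDerivAt Sh (μh * Nh - (B * βmh * Im t / Nh + μh) * Sh t) t)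
    (hEh : ∀ t, HasDerivAt Eh (B * βmh * (Im t / Nh) * Sh t - (νh + μh) * Eh t) t)
    (hIh : ∀ t, HasDerivAt Ih (νh * Eh t - (ηh + μh) * Ih t) t)
    (hAm : ∀ t, HasDerivAt Am
      (μb * (1 - Am t / (k * Nh)) * (Sm t + Em t + Im t) - (ηA + μA) * Am t) t)
    (hSm : ∀ t, HasDerivAt Sm
      (-(B * βhm * Ih t / Nh + μm) * Sm t + ηA * Am t - c * Sm t) t)
    (hEm : ∀ t, HasDerivAt Em
      (B * βhm * (Ih t / Nh) * Sm t - (μm + ηm) * Em t - c * Em t) t)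
    (hIm : ∀ t, HasDerivAt Im (ηm * Em t - μm * Im t - c * Im t) t)
    (hΩ0 : 0 ≤ Sh 0 ∧ 0 ≤ Eh 0 ∧ 0 ≤ Ih 0 ∧ 0 ≤ Am 0 ∧ 0 ≤ Sm 0 ∧ 0 ≤ Em 0 ∧ 0 ≤ Im 0 ∧
      Sh 0 + Eh 0 + Ih 0 ≤ Nh ∧ Am 0 ≤ k * Nh ∧ Sm 0 + Em 0 + Im 0 ≤ m * Nh) :
    ∀ t : ℝ, 0 ≤ t →
      0 ≤ Sh t ∧ 0 ≤ Eh t ∧ 0 ≤ Ih t ∧ 0 ≤ Am t ∧ 0 ≤ Sm t ∧ 0 ≤ Em t ∧ 0 ≤ Im t ∧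
      Sh t + Eh t + Ih t ≤ Nh ∧ Am t ≤ k * Nh ∧ Sm t + Em t + Im t ≤ m * Nh := by
  intro t ht
  have hface : ∀ i, ∃ L, FaceOutflowLinear (dengueFaces Nh k m Sh Eh Ih Am Sm Em Im) i L := by
    intro i
    fin_cases i
    exacts [⟨_, faceOutflowLinear_Sh hSh hμh hB hβmh hNh⟩,
      ⟨_, faceOutflowLinear_Eh hEh hνh hμh hB hβmh hNh hm⟩,
      ⟨_, faceOutflowLinear_Ih hIh hνh hηh hμh⟩,
      ⟨_, faceOutflowLinear_Am hAm hμb hk hηA hμA hNh⟩,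
      ⟨_, faceOutflowLinear_Sm hSm hB hβhm hηA hμm hc hNh⟩,
      ⟨_, faceOutflowLinear_Em hEm hB hβhm hμm hηm hc hNh hm⟩,
      ⟨_, faceOutflowLinear_Im hIm hηm hμm hc⟩,
      ⟨_, faceOutflowLinear_hostTotal hSh hEh hIh hηh hμh⟩,
      ⟨_, faceOutflowLinear_aquaticCap hAm hμb hk hηA hμA hNh⟩,
      ⟨_, faceOutflowLinear_vectorTotal hSm hEm hIm hηA hμm hc hNh hpar2⟩]
  have hdiff := differentiable_dengueFaces (Nh := Nh) (k := k) (m := m)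
    (fun t => (hSh t).differentiableAt) (fun t => (hEh t).differentiableAt)
    (fun t => (hIh t).differentiableAt) (fun t => (hAm t).differentiableAt)
    (fun t => (hSm t).differentiableAt) (fun t => (hEm t).differentiableAt)
    (fun t => (hIm t).differentiableAt)
  exact forall_nonneg_dengueFaces_iff.1 fun i =>
    nonneg_of_faceOutflowLinear hdiff (fun j => forall_nonneg_dengueFaces_iff.2 hΩ0 j) hface ht i

theorem omega_positively_invariant
    (μh B βmh βhm νh ηh μb k m ηA μA μm ηm c Nh : ℝ)
    (Sh Eh Ih Rh Am Sm Em Im : ℝ → ℝ)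
    (hμh : 0 < μh) (hB : 0 < B) (hβmh : 0 < βmh) (hβhm : 0 < βhm)
    (hνh : 0 < νh) (hηh : 0 < ηh) (hμb : 0 < μb) (hk : 0 < k) (hm : 0 < m)
    (hηA : 0 < ηA) (hμA : 0 < μA) (hμm : 0 < μm) (hηm : 0 < ηm)
    (hc : 0 ≤ c) (hNh : 0 < Nh)
    (hpar1 : μb * m ≤ (ηA + μA) * k)
    (hpar2 : ηA * k ≤ (μm + c) * m)
    (hSh : ∀ t, HasDerivAt Sh (μh * Nh - (B * βmh * Im t / Nh + μh) * Sh t) t)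
    (hEh : ∀ t, HasDerivAt Eh (B * βmh * (Im t / Nh) * Sh t - (νh + μh) * Eh t) t)
    (hIh : ∀ t, HasDerivAt Ih (νh * Eh t - (ηh + μh) * Ih t) t)
    (hAm : ∀ t, HasDerivAt Am
      (μb * (1 - Am t / (k * Nh)) * (Sm t + Em t + Im t) - (ηA + μA) * Am t) t)
    (hSm : ∀ t, HasDerivAt Sm
      (-(B * βhm * Ih t / Nh + μm) * Sm t + ηA * Am t - c * Sm t) t)
    (hEm : ∀ t, HasDerivAt Em
      (B * βhm * (Ih t / Nh) * Sm t - (μm + ηm) * Em t - c * Em t) t)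
    (hIm : ∀ t, HasDerivAt Im (ηm * Em t - μm * Im t - c * Im t) t)
    (hΩ0 : 0 ≤ Sh 0 ∧ 0 ≤ Eh 0 ∧ 0 ≤ Ih 0 ∧ 0 ≤ Am 0 ∧ 0 ≤ Sm 0 ∧ 0 ≤ Em 0 ∧ 0 ≤ Im 0 ∧
      Sh 0 + Eh 0 + Ih 0 ≤ Nh ∧ Am 0 ≤ k * Nh ∧ Sm 0 + Em 0 + Im 0 ≤ m * Nh) :
    ∀ t : ℝ, 0 ≤ t →
      0 ≤ Sh t ∧ 0 ≤ Eh t ∧ 0 ≤ Ih t ∧ 0 ≤ Am t ∧ 0 ≤ Sm t ∧ 0 ≤ Em t ∧ 0 ≤ Im t ∧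
      Sh t + Eh t + Ih t ≤ Nh ∧ Am t ≤ k * Nh ∧ Sm t + Em t + Im t ≤ m * Nh :=
  omega_positively_invariant_general μh B βmh βhm νh ηh μb k m ηA μA μm ηm c Nh Sh Eh Ih Am Sm Em Im
    hμh hB hβmh hβhm hνh hηh hμb hk hm hηA hμA hμm hηm hc hNh hpar2 hSh hEh hIh hAm hSm hEm hIm hΩ0
end
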